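/- arXiv:1908.07603 — 4 statements merged into one kernel-verified Lean document; each statement's English description precedes it below -/
import Mathlib

section
/- Let (S,d) be a metric space, ρ : S × S → ℝ a symmetric function, and k₁, k₂ > 0 constants with k₁·e^{-ρ(x,y)} ≤ d(x,y) ≤ k₂·e^{-ρ(x,y)} for all distinct x, y. Suppose additionally that d is linearly connected with constant K, i.e. for all x, y there is a connected set C(x,y) ⊆ S containing x and y of diameter at most K·d(x,y). Then for all distinct x, y and every z ∈ C(x,y) with z ≠ x, one has ρ(x,y) ≤ ρ(x,z) + ln(k₂K/k₁). Combined with the reverse inequality, it follows that |ρ(x,y) - min{ρ(x,z), ρ(z,y)}| ≤ max{ln(k₂K/k₁), ln(2k₂/k₁)} for z ∈ C(x,y) distinct from x and y. -/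
private lemma stmt4_key (k₁ c a b : ℝ) (hk₁ : 0 < k₁) (hc : 0 < c)
    (h : k₁ * Real.exp (-b) ≤ c * Real.exp (-a)) : a ≤ b + Real.log (c / k₁) := by
  have hck : 0 < c / k₁ := div_pos hc hk₁
  have h1 : Real.exp (-b) ≤ (c / k₁) * Real.exp (-a) := by
    rw [div_mul_eq_mul_div, le_div_iff₀ hk₁]; linarith [h]
  have h2 : Real.exp (-b) ≤ Real.exp (Real.log (c / k₁) + (-a)) := by
    rwa [Real.exp_add, Real.exp_log hck]
  have := Real.exp_le_exp.mp h2
  linarith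

/-- Visual comparison `k₁ e^{-ρ} ≤ d ≤ k₂ e^{-ρ}` together with linear
connectivity (with constant `K`) gives, for every `z` in the connecting set `C x y`,
the upper bound `ρ(x,y) ≤ ρ(x,z) + ln(k₂K/k₁)`; combined with the reverse
inequality, `|ρ(x,y) - min{ρ(x,z), ρ(z,y)}| ≤ max{ln(k₂K/k₁), ln(2k₂/k₁)}`. -/
theorem stmt4 {S : Type*} [MetricSpace S] (ρ : S → S → ℝ)
    (hsymm : ∀ x y : S, ρ x y = ρ y x)
    (k₁ k₂ K : ℝ) (hk₁ : 0 < k₁) (hk₂ : 0 < k₂) (hK : 0 < K)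
    (hvis : ∀ x y : S, x ≠ y →
      k₁ * Real.exp (-ρ x y) ≤ dist x y ∧ dist x y ≤ k₂ * Real.exp (-ρ x y))
    (C : S → S → Set S)
    (hC : ∀ x y : S, IsConnected (C x y) ∧ x ∈ C x y ∧ y ∈ C x y ∧
      EMetric.diam (C x y) ≤ ENNReal.ofReal (K * dist x y))
    (x y : S) (hxy : x ≠ y) :
    (∀ z ∈ C x y, z ≠ x → ρ x y ≤ ρ x z + Real.log (k₂ * K / k₁)) ∧
    (∀ z ∈ C x y, z ≠ x → z ≠ y →
      |ρ x y - min (ρ x z) (ρ z y)| ≤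
        max (Real.log (k₂ * K / k₁)) (Real.log (2 * k₂ / k₁))) := by
  obtain ⟨-, hxC, hyC, hdiam⟩ := hC x y
  have hKd : 0 ≤ K * dist x y := mul_nonneg hK.le dist_nonneg
  have hdxy := hvis x y hxy
  -- distances from points in C to points in C are bounded by K * dist x y
  have hdle : ∀ a b : S, a ∈ C x y → b ∈ C x y → dist a b ≤ K * dist x y := by
    intro a b ha hb
    have h1 : edist a b ≤ ENNReal.ofReal (K * dist x y) :=
      le_trans (EMetric.edist_le_diam_of_mem ha hb) hdiam
    rw [dist_edist]
    exact ENNReal.toReal_le_of_le_ofReal hKd h1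
  have part1 : ∀ z ∈ C x y, z ≠ x → ρ x y ≤ ρ x z + Real.log (k₂ * K / k₁) := by
    intro z hz hzx
    have hdxz := hvis x z (Ne.symm hzx)
    have hchain : k₁ * Real.exp (-ρ x z) ≤ (k₂ * K) * Real.exp (-ρ x y) := by
      calc k₁ * Real.exp (-ρ x z) ≤ dist x z := hdxz.1
        _ ≤ K * dist x y := hdle x z hxC hz
        _ ≤ K * (k₂ * Real.exp (-ρ x y)) := by
            exact mul_le_mul_of_nonneg_left hdxy.2 hK.le
        _ = (k₂ * K) * Real.exp (-ρ x y) := by ring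
    exact stmt4_key k₁ (k₂ * K) (ρ x y) (ρ x z) hk₁ (mul_pos hk₂ hK) hchain
  refine ⟨part1, ?_⟩
  intro z hz hzx hzy
  have hdxz := hvis x z (Ne.symm hzx)
  have hdzy := hvis z y hzy
  -- ρ x y ≤ ρ z y + log (k₂K/k₁)
  have h2 : ρ x y ≤ ρ z y + Real.log (k₂ * K / k₁) := by
    have hchain : k₁ * Real.exp (-ρ z y) ≤ (k₂ * K) * Real.exp (-ρ x y) := by
      calc k₁ * Real.exp (-ρ z y) ≤ dist z y := hdzy.1
        _ ≤ K * dist x y := hdle z y hz hyC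
        _ ≤ K * (k₂ * Real.exp (-ρ x y)) := mul_le_mul_of_nonneg_left hdxy.2 hK.le
        _ = (k₂ * K) * Real.exp (-ρ x y) := by ring
    exact stmt4_key k₁ (k₂ * K) (ρ x y) (ρ z y) hk₁ (mul_pos hk₂ hK) hchain
  have hupper : ρ x y - min (ρ x z) (ρ z y) ≤ Real.log (k₂ * K / k₁) := by
    rcases min_cases (ρ x z) (ρ z y) with ⟨hm, -⟩ | ⟨hm, -⟩ <;> rw [hm]
    · linarith [part1 z hz hzx]
    · linarith
  have hlower : min (ρ x z) (ρ z y) - ρ x y ≤ Real.log (2 * k₂ / k₁) := by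
    set m := min (ρ x z) (ρ z y) with hm
    have he1 : Real.exp (-ρ x z) ≤ Real.exp (-m) :=
      Real.exp_le_exp.mpr (by simp [hm, neg_le_neg_iff, min_le_left])
    have he2 : Real.exp (-ρ z y) ≤ Real.exp (-m) :=
      Real.exp_le_exp.mpr (by simp [hm, neg_le_neg_iff, min_le_right])
    have hchain : k₁ * Real.exp (-ρ x y) ≤ (2 * k₂) * Real.exp (-m) := by
      calc k₁ * Real.exp (-ρ x y) ≤ dist x y := hdxy.1
        _ ≤ dist x z + dist z y := dist_triangle x z y
        _ ≤ k₂ * Real.exp (-ρ x z) + k₂ * Real.exp (-ρ z y) := add_le_add hdxz.2 hdzy.2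
        _ ≤ k₂ * Real.exp (-m) + k₂ * Real.exp (-m) := by
            exact add_le_add (mul_le_mul_of_nonneg_left he1 hk₂.le)
              (mul_le_mul_of_nonneg_left he2 hk₂.le)
        _ = (2 * k₂) * Real.exp (-m) := by ring
    have := stmt4_key k₁ (2 * k₂) m (ρ x y) hk₁ (by linarith) hchain
    linarith
  rw [abs_le]
  constructor
  · linarith [le_max_right (Real.log (k₂ * K / k₁)) (Real.log (2 * k₂ / k₁))]
  · linarith [le_max_left (Real.log (k₂ * K / k₁)) (Real.log (2 * k₂ / k₁))]
end

section
/- Let (X,d) be a metric space, δ ≥ 0, and let r₁, r₂ : [0,∞) → X be geodesic rays based at p and l : ℝ → X a geodesic line, with m ≥ 0 and t₀ ∈ ℝ, satisfying the following δ-thin ideal triangle conditions: d(r₁(m-j), r₂(m-j)) ≤ δ for all 0 ≤ j ≤ m; d(r₁(m+j), l(t₀-j)) ≤ δ for all j ≥ 0; and d(r₂(m+j), l(t₀+j)) ≤ δ for all j ≥ 0. Let K ≥ 0 and set b = l(t₀ - K) (a point on l on the r₁-side of l(t₀)). Then for every s ≥ 0, d(r₂(s), b) ≥ K - 2δ. 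-/
/-! Split at the internal point `r₂(m)`. Before it, `r₂(s)` is `δ`-close to `r₁(s)`, and `r₁` passes
`δ`-close to `b` at time `m + K`, so `d(r₂(s), b) ≥ (m + K - s) - 2δ ≥ K - 2δ`. After it, `r₂(s)` is
`δ`-close to `l(t₀ + s - m)`, which lies at distance `s - m + K ≥ K` from `b` along `l`. -/

theorem dist_le_dist_add_of_dist_le {X : Type*} [PseudoMetricSpace X] {x x' y y' : X}
    {ε₁ ε₂ : ℝ} (hx : dist x x' ≤ ε₁) (hy : dist y y' ≤ ε₂) :
    dist x' y' ≤ dist x y + ε₁ + ε₂ := by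
  have := dist_triangle4 x' x y y'
  rw [dist_comm x' x] at this
  linarith

theorem stmt14_general {X : Type*} [MetricSpace X] (δ : ℝ) (hδ : 0 ≤ δ)
    (r₁ r₂ l : ℝ → X)
    (hr₁ : ∀ s t : ℝ, 0 ≤ s → 0 ≤ t → dist (r₁ s) (r₁ t) = |s - t|)
    (hl : ∀ s t : ℝ, dist (l s) (l t) = |s - t|)
    (m t₀ : ℝ)
    (h1 : ∀ j : ℝ, 0 ≤ j → j ≤ m → dist (r₁ (m - j)) (r₂ (m - j)) ≤ δ)
    (h2 : ∀ j : ℝ, 0 ≤ j → dist (r₁ (m + j)) (l (t₀ - j)) ≤ δ)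
    (h3 : ∀ j : ℝ, 0 ≤ j → dist (r₂ (m + j)) (l (t₀ + j)) ≤ δ)
    (K : ℝ) (hK : 0 ≤ K) :
    ∀ s : ℝ, 0 ≤ s → K - 2 * δ ≤ dist (r₂ s) (l (t₀ - K)) := by
  intro s hs
  rcases le_total s m with hsm | hms
  · have hfellow : dist (r₂ s) (r₁ s) ≤ δ := by
      simpa only [sub_sub_cancel, dist_comm] using h1 (m - s) (by linarith) (by linarith)
    have hnear : dist (l (t₀ - K)) (r₁ (m + K)) ≤ δ := by
      simpa only [dist_comm] using h2 K hK
    have halong : dist (r₁ s) (r₁ (m + K)) = m + K - s := by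
      rw [hr₁ s (m + K) hs (by linarith), abs_sub_comm, abs_of_nonneg (by linarith)]
    linarith [dist_le_dist_add_of_dist_le hfellow hnear]
  · have hfellow : dist (r₂ s) (l (t₀ + (s - m))) ≤ δ := by
      simpa only [add_sub_cancel] using h3 (s - m) (by linarith)
    have halong : dist (l (t₀ + (s - m))) (l (t₀ - K)) = s - m + K := by
      rw [hl, abs_of_nonneg (by linarith)]
      ring
    linarith [dist_triangle_left (l (t₀ + (s - m))) (l (t₀ - K)) (r₂ s)]

/-- Let `r₁, r₂` be geodesic rays at `p`, `l` a geodesic line, with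
the δ-thin ideal triangle conditions for internal points `r₁(m), r₂(m), l(t₀)`:
`d(r₁(m-j), r₂(m-j)) ≤ δ` for `0 ≤ j ≤ m`, `d(r₁(m+j), l(t₀-j)) ≤ δ` and
`d(r₂(m+j), l(t₀+j)) ≤ δ` for `j ≥ 0`. If `b = l(t₀ - K)` with `K ≥ 0`, then every
point of the ray `r₂` is at distance at least `K - 2δ` from `b`. -/
theorem stmt14 {X : Type*} [MetricSpace X] (δ : ℝ) (hδ : 0 ≤ δ) (p : X)
    (r₁ r₂ l : ℝ → X) (hr₁0 : r₁ 0 = p) (hr₂0 : r₂ 0 = p)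
    (hr₁ : ∀ s t : ℝ, 0 ≤ s → 0 ≤ t → dist (r₁ s) (r₁ t) = |s - t|)
    (hr₂ : ∀ s t : ℝ, 0 ≤ s → 0 ≤ t → dist (r₂ s) (r₂ t) = |s - t|)
    (hl : ∀ s t : ℝ, dist (l s) (l t) = |s - t|)
    (m t₀ : ℝ) (hm : 0 ≤ m)
    (h1 : ∀ j : ℝ, 0 ≤ j → j ≤ m → dist (r₁ (m - j)) (r₂ (m - j)) ≤ δ)
    (h2 : ∀ j : ℝ, 0 ≤ j → dist (r₁ (m + j)) (l (t₀ - j)) ≤ δ)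
    (h3 : ∀ j : ℝ, 0 ≤ j → dist (r₂ (m + j)) (l (t₀ + j)) ≤ δ)
    (K : ℝ) (hK : 0 ≤ K) :
    ∀ s : ℝ, 0 ≤ s → K - 2 * δ ≤ dist (r₂ s) (l (t₀ - K)) :=
  stmt14_general δ hδ r₁ r₂ l hr₁ hl m t₀ h1 h2 h3 K hK
end

section
/- Let (X,d) be a metric space, δ ≥ 0, and let t₋₁, t₀ : [0,∞) → X be geodesic rays based at * such that all relevant triangles are δ-thin. Suppose T ≥ 0 satisfies d(t₋₁(T), t₀(T)) ≤ 3δ, and suppose m' ≥ 0 is a number such that there is a geodesic line l' and the ideal triangle (t₋₁, t₀, l') is δ-thin with internal points t₋₁(m'), t₀(m'), v ∈ l' (i.e. d(t₋₁(m'+j), l'(-j+t_v)) ≤ δ and d(t₀(m'+j), l'(j+t_v)) ≤ δ for all j ≥ 0, where v = l'(t_v)). If m' < T, then T - m' ≤ (5/2)δ; consequently m' ≥ T - 3δ. -/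
/-!
With `k = T - m'`, the points `l' (t_v - k)` and `l' (t_v + k)` are `2k` apart on the line, but
they are joined through `t₋₁(T)` and `t₀(T)` by a path of length at most `δ + 3δ + δ`.
-/

lemma two_mul_le_of_dist_geodesic_line_le {X : Type*} [MetricSpace X] {l : ℝ → X}
    (hl : ∀ s t : ℝ, dist (l s) (l t) = |s - t|) {x y : X} {c k δ : ℝ} (hk : 0 ≤ k)
    (hx : dist x (l (c - k)) ≤ δ) (hy : dist y (l (c + k)) ≤ δ) :
    2 * k ≤ 2 * δ + dist x y := by
  have hline : dist (l (c - k)) (l (c + k)) = 2 * k := by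
    rw [hl, abs_of_nonpos (by linarith)]
    ring
  have htri := dist_triangle4 (l (c - k)) x y (l (c + k))
  rw [dist_comm (l (c - k)) x] at htri
  linarith

theorem stmt16_general {X : Type*} [MetricSpace X] (δ : ℝ) (hδ : 0 ≤ δ)
    (tm1 t0 : ℝ → X)
    (l' : ℝ → X) (hl' : ∀ s t : ℝ, dist (l' s) (l' t) = |s - t|)
    (T : ℝ) (hclose : dist (tm1 T) (t0 T) ≤ 3 * δ)
    (m' t_v : ℝ)
    (hthin1 : ∀ j : ℝ, 0 ≤ j → dist (tm1 (m' + j)) (l' (t_v - j)) ≤ δ)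
    (hthin2 : ∀ j : ℝ, 0 ≤ j → dist (t0 (m' + j)) (l' (t_v + j)) ≤ δ) :
    (m' < T → T - m' ≤ (5 / 2) * δ) ∧ T - 3 * δ ≤ m' := by
  have hgap : m' < T → T - m' ≤ (5 / 2) * δ := by
    intro hlt
    have hk : 0 ≤ T - m' := by linarith
    have hmT : m' + (T - m') = T := by ring
    have h1 := hthin1 (T - m') hk
    have h2 := hthin2 (T - m') hk
    rw [hmT] at h1 h2
    linarith [two_mul_le_of_dist_geodesic_line_le hl' hk h1 h2]
  refine ⟨hgap, ?_⟩
  rcases lt_or_ge m' T with hlt | hge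
  · linarith [hgap hlt]
  · linarith

/-- Let `t₋₁, t₀` be geodesic rays based at `*` with
`d(t₋₁(T), t₀(T)) ≤ 3δ`, and let `l'` be a geodesic line so that the ideal
triangle `(t₋₁, t₀, l')` is δ-thin with internal points `t₋₁(m'), t₀(m'),
v = l'(t_v)`. If `m' < T` then `T - m' ≤ (5/2)δ`; consequently `m' ≥ T - 3δ`. -/
theorem stmt16 {X : Type*} [MetricSpace X] (δ : ℝ) (hδ : 0 ≤ δ) (star : X)
    (tm1 t0 : ℝ → X) (htm1_0 : tm1 0 = star) (ht0_0 : t0 0 = star)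
    (hray1 : ∀ s t : ℝ, 0 ≤ s → 0 ≤ t → dist (tm1 s) (tm1 t) = |s - t|)
    (hray2 : ∀ s t : ℝ, 0 ≤ s → 0 ≤ t → dist (t0 s) (t0 t) = |s - t|)
    (l' : ℝ → X) (hl' : ∀ s t : ℝ, dist (l' s) (l' t) = |s - t|)
    (T : ℝ) (hT : 0 ≤ T) (hclose : dist (tm1 T) (t0 T) ≤ 3 * δ)
    (m' t_v : ℝ) (hm' : 0 ≤ m')
    (hthin1 : ∀ j : ℝ, 0 ≤ j → dist (tm1 (m' + j)) (l' (t_v - j)) ≤ δ)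
    (hthin2 : ∀ j : ℝ, 0 ≤ j → dist (t0 (m' + j)) (l' (t_v + j)) ≤ δ) :
    (m' < T → T - m' ≤ (5 / 2) * δ) ∧ T - 3 * δ ≤ m' :=
  stmt16_general δ hδ tm1 t0 l' hl' T hclose m' t_v hthin1 hthin2
end

section
/- Let (Z, d) be a metric space, K ≥ 1, and suppose Z is covered by a family of subsets {Q_i}_{i ∈ ℤ} together with two extra points x₁, x₂ such that: each Q_i is connected; c_i, c_{i+1} ∈ Q_i for a bi-infinite sequence of points (c_i)_{i∈ℤ}; diam(Q_i) ≤ K·d(c_i, c_{i+1}) for all i; the series Σ_{i∈ℤ} d(c_i, c_{i+1}) converges with sum equal to d(x₁, x₂); x₁ is a limit point of ∪_{i ≤ n} Q_i as n → -∞ and x₂ is a limit point of ∪_{i ≥ n} Q_i as n → ∞. Then the set Q = {x₁, x₂} ∪ ⋃_{i∈ℤ} Q_i is connected and has diameter at most K·d(x₁, x₂). -/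
private lemma sum_split (f : ℤ → ℝ) {a b d : ℤ} (h1 : a ≤ b) (h2 : b ≤ d) :
    ∑ k ∈ Finset.Ico a d, f k = (∑ k ∈ Finset.Ico a b, f k) + ∑ k ∈ Finset.Ico b d, f k := by
  rw [← Finset.Ico_union_Ico_eq_Ico h1 h2,
    Finset.sum_union (Finset.Ico_disjoint_Ico_consecutive a b d)]

private lemma chain_dist {Z : Type*} [MetricSpace Z] (c : ℤ → Z) :
    ∀ i j : ℤ, i ≤ j →
      dist (c i) (c j) ≤ ∑ k ∈ Finset.Ico i j, dist (c k) (c (k + 1)) := by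
  intro i j
  refine Int.le_induction (motive := fun j _ => dist (c i) (c j) ≤ ∑ k ∈ Finset.Ico i j, dist (c k) (c (k + 1))) ?_ ?_ j
  · simp
  · intro n hn ih
    have h1 : Finset.Ico i (n + 1) = insert n (Finset.Ico i n) := by
      ext k; simp only [Finset.mem_Ico, Finset.mem_insert]; omega
    rw [h1, Finset.sum_insert (by simp)]
    calc dist (c i) (c (n + 1)) ≤ dist (c i) (c n) + dist (c n) (c (n + 1)) :=
          dist_triangle _ _ _
      _ ≤ _ := by linarith

/-- A bi-infinite chain of connected sets `Q i`, with `Q i`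
containing the consecutive "cut points" `c i, c (i+1)`, diameters linearly
bounded by `K·d(c i, c (i+1))`, whose distance-sum converges to `d(x₁,x₂)`, and
with `x₁, x₂` limit points of the two ends of the chain, unions together with
`x₁, x₂` to a connected set of diameter at most `K·d(x₁,x₂)`. -/
theorem stmt17 {Z : Type*} [MetricSpace Z] (K : ℝ) (hK : 1 ≤ K)
    (Q : ℤ → Set Z) (c : ℤ → Z) (x₁ x₂ : Z)
    (hcov : ({x₁, x₂} ∪ ⋃ i : ℤ, Q i) = Set.univ)
    (hconn : ∀ i : ℤ, IsConnected (Q i))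
    (hc : ∀ i : ℤ, c i ∈ Q i ∧ c (i + 1) ∈ Q i)
    (hdiam : ∀ i : ℤ, EMetric.diam (Q i) ≤ ENNReal.ofReal (K * dist (c i) (c (i + 1))))
    (hsum : Summable (fun i : ℤ => dist (c i) (c (i + 1))))
    (hsum' : (∑' i : ℤ, dist (c i) (c (i + 1))) = dist x₁ x₂)
    (hx₁ : ∀ n : ℤ, x₁ ∈ closure (⋃ i ≤ n, Q i))
    (hx₂ : ∀ n : ℤ, x₂ ∈ closure (⋃ i ≥ n, Q i)) :
    IsConnected ({x₁, x₂} ∪ ⋃ i : ℤ, Q i) ∧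
      EMetric.diam ({x₁, x₂} ∪ ⋃ i : ℤ, Q i) ≤ ENNReal.ofReal (K * dist x₁ x₂) := by
  set U : Set Z := ⋃ i : ℤ, Q i with hU
  have hK0 : (0:ℝ) ≤ K := le_trans zero_le_one hK
  -- U is preconnected
  have hUpre : IsPreconnected U := by
    apply IsPreconnected.iUnion_of_chain (fun n => (hconn n).isPreconnected)
    intro n
    exact ⟨c (n + 1), (hc n).2, by simpa using (hc (n+1)).1⟩
  -- x₁, x₂ are in closure U
  have hx₁U : x₁ ∈ closure U := by
    refine closure_mono ?_ (hx₁ 0)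
    exact Set.iUnion₂_subset fun i _ => Set.subset_iUnion Q i
  have hx₂U : x₂ ∈ closure U := by
    refine closure_mono ?_ (hx₂ 0)
    exact Set.iUnion₂_subset fun i _ => Set.subset_iUnion Q i
  have hsubcl : ({x₁, x₂} ∪ U) ⊆ closure U := by
    rintro z (hz | hz)
    · rcases hz with rfl | rfl
      exacts [hx₁U, by simpa using hx₂U]
    · exact subset_closure hz
  constructor
  · refine ⟨⟨x₁, Or.inl (Or.inl rfl)⟩, ?_⟩
    exact hUpre.subset_closure Set.subset_union_right hsubcl
  · -- diameter bound
    have key : ∀ i j : ℤ, i ≤ j → ∀ y ∈ Q i, ∀ z ∈ Q j,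
        dist y z ≤ K * dist x₁ x₂ := by
      intro i j hij y hy z hz
      have hdist : ∀ (a b : Z) (k : ℤ), a ∈ Q k → b ∈ Q k →
          dist a b ≤ K * dist (c k) (c (k + 1)) := by
        intro a b k ha hb
        have h1 : edist a b ≤ ENNReal.ofReal (K * dist (c k) (c (k + 1))) :=
          le_trans (EMetric.edist_le_diam_of_mem ha hb) (hdiam k)
        exact (edist_le_ofReal (by positivity)).1 h1
      rcases eq_or_lt_of_le hij with rfl | hlt
      · have h1 := hdist y z i hy hz
        have h2 : dist (c i) (c (i + 1)) ≤ dist x₁ x₂ := by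
          rw [← hsum']
          have := Summable.sum_le_tsum ({i} : Finset ℤ) (fun k _ => dist_nonneg) hsum
          simpa using this
        calc dist y z ≤ K * dist (c i) (c (i+1)) := h1
          _ ≤ K * dist x₁ x₂ := by nlinarith
      · have h1 : dist y (c (i + 1)) ≤ K * dist (c i) (c (i + 1)) :=
          hdist y (c (i+1)) i hy (hc i).2
        have h2 : dist (c j) z ≤ K * dist (c j) (c (j + 1)) :=
          hdist (c j) z j (hc j).1 hz
        have h3 : dist (c (i+1)) (c j) ≤ ∑ k ∈ Finset.Ico (i+1) j, dist (c k) (c (k+1)) :=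
          chain_dist c (i+1) j hlt
        have hsum3 : dist (c i) (c (i+1)) + (∑ k ∈ Finset.Ico (i+1) j, dist (c k) (c (k+1)))
            + dist (c j) (c (j+1)) = ∑ k ∈ Finset.Ico i (j+1), dist (c k) (c (k+1)) := by
          rw [sum_split _ (show i ≤ i+1 by omega) (show i+1 ≤ j+1 by omega),
            sum_split _ (show i+1 ≤ j by omega) (show j ≤ j+1 by omega)]
          have e1 : Finset.Ico i (i+1) = {i} := by
            ext k; simp only [Finset.mem_Ico, Finset.mem_singleton]; omega
          have e2 : Finset.Ico j (j+1) = {j} := by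
            ext k; simp only [Finset.mem_Ico, Finset.mem_singleton]; omega
          rw [e1, e2]; simp; ring
        have h4 : ∑ k ∈ Finset.Ico i (j+1), dist (c k) (c (k+1)) ≤ dist x₁ x₂ := by
          rw [← hsum']
          exact Summable.sum_le_tsum _ (fun k _ => dist_nonneg) hsum
        have h5 : dist (c (i+1)) (c j) ≤ K * ∑ k ∈ Finset.Ico (i+1) j, dist (c k) (c (k+1)) := by
          have hnn : 0 ≤ ∑ k ∈ Finset.Ico (i+1) j, dist (c k) (c (k+1)) :=
            Finset.sum_nonneg fun k _ => dist_nonneg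
          nlinarith
        calc dist y z ≤ dist y (c (i+1)) + dist (c (i+1)) (c j) + dist (c j) z :=
              dist_triangle4 _ _ _ _
          _ ≤ K * dist (c i) (c (i+1)) + K * (∑ k ∈ Finset.Ico (i+1) j, dist (c k) (c (k+1)))
              + K * dist (c j) (c (j+1)) := by linarith
          _ = K * (∑ k ∈ Finset.Ico i (j+1), dist (c k) (c (k+1))) := by rw [← hsum3]; ring
          _ ≤ K * dist x₁ x₂ := by nlinarith
    have hdU : EMetric.diam U ≤ ENNReal.ofReal (K * dist x₁ x₂) := by
      apply EMetric.diam_le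
      intro y hy z hz
      rcases Set.mem_iUnion.1 hy with ⟨i, hyi⟩
      rcases Set.mem_iUnion.1 hz with ⟨j, hzj⟩
      rcases le_total i j with hij | hji
      · exact (edist_le_ofReal (by positivity)).2 (key i j hij y hyi z hzj)
      · rw [edist_comm]
        exact (edist_le_ofReal (by positivity)).2 (key j i hji z hzj y hyi)
    calc EMetric.diam ({x₁, x₂} ∪ U) ≤ EMetric.diam (closure U) :=
          EMetric.diam_mono hsubcl
      _ = EMetric.diam U := EMetric.diam_closure U
      _ ≤ _ := hdU
end
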